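/- arXiv:2402.08927 — 3 statements merged into one kernel-verified Lean document; each statement's English description precedes it below -/
import Mathlib

section
/- Let n ≥ 1, p ∈ (0,1), and let f_n be the cluster-size function at the root of the perfect binary tree of depth n. Then for every k ∈ {1, …, |B_n|}: Σ_{A⊆B_n, |A|=k} ⟨f_n, Ψ_A^{p,B_n}⟩_{p,B_n}² = ν_p^{2k} Σ_{d=1}^n C(d−1, k−1) · 2^d · g_{p,n}(d), where C(·,·) denotes the binomial coefficient. -/
open Finset Filter

noncomputable section
open scoped Classical

/-- Edges on the path from the root to vertex `v`, in heap indexing of the infinite binary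
tree: the root is `0`, the children of `v` are `2v+1` and `2v+2`, and each non-root vertex
is identified with the edge joining it to its parent `(v−1)/2`. -/
def pathSet : ℕ → Finset ℕ
  | 0 => ∅
  | (v + 1) => insert (v + 1) (pathSet (v / 2))
decreasing_by exact Nat.lt_succ_of_le (Nat.div_le_self v 2)

/-- The depth of vertex `v`. -/
def depth (v : ℕ) : ℕ := Nat.log2 (v + 1)

/-- The edge set B_n of the perfect binary tree of depth `n` (its vertex set is
{0,…,2^{n+1}−2} and each non-root vertex is identified with the edge to its parent),
so |B_n| = 2^{n+1} − 2. -/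
def Eset (n : ℕ) : Finset ℕ := Finset.Icc 1 (2 ^ (n + 1) - 2)

/-- ν_p = √((1-p)/p). -/
def nu (p : ℝ) : ℝ := Real.sqrt ((1 - p) / p)

/-- Ψ_A^{p,B_n}(x) = Π_{i∈A} x_i ν_p^{x_i}: a configuration is encoded by the set `x` of
open edges; the factor is ν_p when the edge is open (+1) and −ν_p⁻¹ when closed (−1). -/
def PsiT (p : ℝ) (A x : Finset ℕ) : ℝ :=
  ∏ i ∈ A, (if i ∈ x then nu p else -(nu p)⁻¹)

/-- The Bernoulli product measure π_{p,B_n} of the configuration with open-edge set `x`. -/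
def piT (p : ℝ) (n : ℕ) (x : Finset ℕ) : ℝ :=
  p ^ x.card * (1 - p) ^ ((Eset n).card - x.card)

/-- The inner product ⟨f,g⟩_{p,B_n} = Σ_{x⊆B_n} f(x) g(x) π_{p,B_n}(x). -/
def innT (p : ℝ) (n : ℕ) (f g : Finset ℕ → ℝ) : ℝ :=
  ∑ x ∈ (Eset n).powerset, f x * g x * piT p n x

/-- The cluster-size function f_n(x) = Σ_{v∈V_n} Π_{e∈P_v} (1+x_e)/2: the number of
vertices of the depth-n perfect binary tree joined to the root by open edges. -/
def fcl (n : ℕ) (x : Finset ℕ) : ℝ :=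
  ∑ v ∈ Finset.range (2 ^ (n + 1) - 1), ∏ e ∈ pathSet v, (if e ∈ x then (1 : ℝ) else 0)

/-- var_p(f_n) = Σ_{∅≠A⊆B_n} ⟨f_n,Ψ_A⟩². -/
def varT (p : ℝ) (n : ℕ) : ℝ :=
  ∑ A ∈ (Eset n).powerset.filter (fun A => A.Nonempty), (innT p n (fcl n) (PsiT p A)) ^ 2

/-- g_{p,n}(d). -/
def gtree (p : ℝ) (n d : ℕ) : ℝ :=
  if p = 1 / 2 then ((2 : ℝ) ^ (2 * d))⁻¹ * ((n + 1 - d : ℕ) : ℝ) ^ 2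
  else p ^ (2 * d) * ((1 - (2 * p) ^ (n + 1 - d)) / (1 - 2 * p)) ^ 2

lemma sub_helper (Y q : ℕ) (h : 1 ≤ Y) : Y + q - 1 - (Y - 1) = q := by omega

lemma pathSet_zero : pathSet 0 = ∅ := by rw [pathSet]

lemma pathSet_succ (v : ℕ) : pathSet (v + 1) = insert (v + 1) (pathSet (v / 2)) := by
  rw [pathSet]

lemma pathSet_subset_Icc (v : ℕ) : pathSet v ⊆ Finset.Icc 1 v := by
  induction v using Nat.strong_induction_on with
  | _ v ih =>
    match v with
    | 0 => rw [pathSet_zero]; exact empty_subset _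
    | v + 1 =>
      rw [pathSet_succ]
      intro a ha
      rcases mem_insert.1 ha with h | h
      · subst h; simp
      · have := ih (v / 2) (Nat.lt_succ_of_le (Nat.div_le_self v 2)) h
        rw [mem_Icc] at this ⊢
        exact ⟨this.1, le_trans this.2 (le_trans (Nat.div_le_self v 2) (Nat.le_succ v))⟩

lemma mem_pathSet_iff (a v : ℕ) :
    a ∈ pathSet v ↔ 1 ≤ a ∧ ∃ j, (v + 1) / 2 ^ j = a + 1 := by
  induction v using Nat.strong_induction_on with
  | _ v ih =>
    match v with
    | 0 =>
      rw [pathSet_zero]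
      simp only [notMem_empty, false_iff, not_and]
      rintro ha ⟨j, hj⟩
      have h2 : (0 + 1 : ℕ) / 2 ^ j ≤ 1 := Nat.div_le_self _ _
      omega
    | v + 1 =>
      rw [pathSet_succ]
      constructor
      · intro ha
        rcases mem_insert.1 ha with h | h
        · exact ⟨by omega, 0, by simp [h]⟩
        · obtain ⟨h1, j, hj⟩ := (ih (v / 2) (Nat.lt_succ_of_le (Nat.div_le_self v 2))).1 h
          refine ⟨h1, j + 1, ?_⟩
          have : (v + 1 + 1) / 2 = v / 2 + 1 := by omega
          rw [pow_succ, Nat.mul_comm, ← Nat.div_div_eq_div_mul, this]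
          exact hj
      · rintro ⟨h1, j, hj⟩
        match j with
        | 0 =>
          simp at hj
          exact mem_insert.2 (Or.inl (by omega))
        | j + 1 =>
          refine mem_insert.2 (Or.inr ?_)
          rw [(ih (v / 2) (Nat.lt_succ_of_le (Nat.div_le_self v 2)))]
          refine ⟨h1, j, ?_⟩
          have h2 : (v + 1 + 1) / 2 = v / 2 + 1 := by omega
          rw [pow_succ, Nat.mul_comm, ← Nat.div_div_eq_div_mul, h2] at hj
          exact hj

lemma mem_pathSet_self {v : ℕ} (hv : 1 ≤ v) : v ∈ pathSet v :=
  (mem_pathSet_iff v v).2 ⟨hv, 0, by simp⟩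

lemma pathSet_subset_of_mem {m v : ℕ} (h : m ∈ pathSet v) : pathSet m ⊆ pathSet v := by
  intro a ha
  obtain ⟨h1, j, hj⟩ := (mem_pathSet_iff a m).1 ha
  obtain ⟨hm1, l, hl⟩ := (mem_pathSet_iff m v).1 h
  refine (mem_pathSet_iff a v).2 ⟨h1, l + j, ?_⟩
  rw [pow_add, ← Nat.div_div_eq_div_mul, hl, hj]

lemma mem_pathSet_of_le {a m v : ℕ} (ha : a ∈ pathSet v) (hm : m ∈ pathSet v) (h : a ≤ m) :
    a ∈ pathSet m := by
  obtain ⟨h1, j, hj⟩ := (mem_pathSet_iff a v).1 ha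
  obtain ⟨hm1, l, hl⟩ := (mem_pathSet_iff m v).1 hm
  rcases le_or_gt l j with hlj | hlj
  · refine (mem_pathSet_iff a m).2 ⟨h1, j - l, ?_⟩
    rw [← hl, Nat.div_div_eq_div_mul, ← pow_add]
    rw [Nat.add_sub_cancel' hlj]
    exact hj
  · have hle : (v + 1) / 2 ^ l ≤ (v + 1) / 2 ^ j :=
      Nat.div_le_div_left (Nat.pow_le_pow_right (by norm_num) hlj.le)
        (Nat.pow_pos (by norm_num))
    have : a = m := by omega
    subst this
    exact mem_pathSet_self h1

lemma card_pathSet (v : ℕ) : (pathSet v).card = depth v := by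
  induction v using Nat.strong_induction_on with
  | _ v ih =>
    match v with
    | 0 => rw [pathSet_zero]; simp [depth, Nat.log2]; rfl
    | v + 1 =>
      rw [pathSet_succ, card_insert_of_notMem,
        ih (v / 2) (Nat.lt_succ_of_le (Nat.div_le_self v 2))]
      · show _ = Nat.log2 (v + 1 + 1)
        rw [Nat.log2_def]
        simp only [show v + 1 + 1 ≥ 2 from by omega, if_true]
        have : (v + 1 + 1) / 2 = v / 2 + 1 := by omega
        rw [this]
        rfl
      · intro h
        have := pathSet_subset_Icc (v / 2) h
        rw [mem_Icc] at this
        omega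

/-! ### depth basics -/

lemma depth_le (v : ℕ) : 2 ^ depth v ≤ v + 1 := Nat.log2_self_le (by omega)

lemma lt_depth (v : ℕ) : v + 1 < 2 ^ (depth v + 1) := Nat.lt_log2_self

lemma depth_eq_iff (v d : ℕ) : depth v = d ↔ 2 ^ d ≤ v + 1 ∧ v + 1 < 2 ^ (d + 1) := by
  constructor
  · rintro rfl; exact ⟨depth_le v, lt_depth v⟩
  · rintro ⟨h1, h2⟩
    have hd := depth_le v
    have hd2 := lt_depth v
    by_contra hne
    rcases Nat.lt_or_ge (depth v) d with h | h
    · have : 2 ^ (depth v + 1) ≤ 2 ^ d := Nat.pow_le_pow_right (by norm_num) (by omega)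
      omega
    · have : 2 ^ (d + 1) ≤ 2 ^ depth v := Nat.pow_le_pow_right (by norm_num) (by omega)
      omega

lemma Eset_depth_fiber (n d : ℕ) (hd1 : 1 ≤ d) (hdn : d ≤ n) :
    ((Eset n).filter (fun m => depth m = d)).card = 2 ^ d := by
  have h2 : (1:ℕ) ≤ 2 ^ d := Nat.one_le_two_pow
  have h3 : (2:ℕ) ≤ 2 ^ d := by
    calc (2:ℕ) = 2^1 := rfl
    _ ≤ 2 ^ d := Nat.pow_le_pow_right (by norm_num) hd1
  have h4 : 2 ^ (d+1) ≤ 2 ^ (n+1) := Nat.pow_le_pow_right (by norm_num) (by omega)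
  have h5 : (2:ℕ)^(d+1) = 2 * 2^d := by ring
  have h6 : (2:ℕ) ≤ 2 ^ (n+1) := by omega
  have he : (Eset n).filter (fun m => depth m = d) = Finset.Icc (2 ^ d - 1) (2 ^ (d + 1) - 2) := by
    ext v
    simp only [Eset, mem_filter, mem_Icc, depth_eq_iff]
    constructor
    · rintro ⟨⟨hv1, hv2⟩, hle, hlt⟩; omega
    · rintro ⟨hle, hlt⟩
      refine ⟨⟨by omega, by omega⟩, by omega, by omega⟩
  rw [he, Nat.card_Icc]
  omega

lemma depth_mem_Icc {n m : ℕ} (hm : m ∈ Eset n) : depth m ∈ Finset.Icc 1 n := by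
  rw [Eset, mem_Icc] at hm
  have h1 := depth_le m
  have h2 := lt_depth m
  rw [mem_Icc]
  constructor
  · by_contra h
    have : depth m = 0 := by omega
    rw [this] at h2
    norm_num at h2
    omega
  · by_contra h
    have : 2 ^ (n + 1) ≤ 2 ^ depth m := Nat.pow_le_pow_right (by norm_num) (by omega)
    have h6 : (2:ℕ) ≤ 2 ^ (n+1) := by
      calc (2:ℕ) = 2^1 := rfl
      _ ≤ 2 ^ (n+1) := Nat.pow_le_pow_right (by norm_num) (by omega)
    omega

/-! ### nu basics -/

lemma nu_pos {p : ℝ} (hp0 : 0 < p) (hp1 : p < 1) : 0 < nu p :=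
  Real.sqrt_pos.2 (div_pos (by linarith) hp0)

lemma nu_sq {p : ℝ} (hp0 : 0 < p) (hp1 : p < 1) : nu p ^ 2 = (1 - p) / p := by
  rw [nu, sq, Real.mul_self_sqrt (le_of_lt (div_pos (by linarith) hp0))]

lemma nu_key {p : ℝ} (hp0 : 0 < p) (hp1 : p < 1) : nu p * p - (nu p)⁻¹ * (1 - p) = 0 := by
  have h := nu_pos hp0 hp1
  have h3 : nu p * nu p = (1 - p) / p := by rw [← sq]; exact nu_sq hp0 hp1
  have h4 : nu p * nu p * p = 1 - p := by rw [h3]; field_simp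
  field_simp
  linear_combination h4

/-! ### indicator products -/

lemma prod_ind_one (s x : Finset ℕ) :
    (∏ e ∈ s, if e ∈ x then (1:ℝ) else 0) = if s ⊆ x then 1 else 0 := by
  split_ifs with h
  · exact prod_eq_one (fun e he => if_pos (h he))
  · obtain ⟨a, ha, hax⟩ := not_subset.1 h
    exact prod_eq_zero ha (if_neg hax)

lemma prod_ind_zero {E x P : Finset ℕ} (hP : P ⊆ E) (_hx : x ⊆ E) :
    (∏ e ∈ E \ x, if e ∈ P then (0:ℝ) else 1) = if P ⊆ x then 1 else 0 := by
  split_ifs with h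
  · refine prod_eq_one (fun e he => if_neg (fun heP => ?_))
    rw [Finset.mem_sdiff] at he
    exact he.2 (h heP)
  · obtain ⟨a, ha, hax⟩ := not_subset.1 h
    exact prod_eq_zero (mem_sdiff.2 ⟨hP ha, hax⟩) (if_pos ha)

lemma main_sum {p : ℝ} (hp0 : 0 < p) (hp1 : p < 1) (E P A : Finset ℕ) (hP : P ⊆ E) (hA : A ⊆ E) :
    ∑ x ∈ E.powerset,
        (∏ e ∈ P, if e ∈ x then (1:ℝ) else 0) *
          (∏ i ∈ A, if i ∈ x then nu p else -(nu p)⁻¹) *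
          (p ^ x.card * (1 - p) ^ (E.card - x.card))
      = if A ⊆ P then nu p ^ A.card * p ^ P.card else 0 := by
  set F : ℕ → ℝ := fun e => (if e ∈ A then nu p else 1) * p with hF
  set G : ℕ → ℝ := fun e =>
    (if e ∈ P then 0 else 1) * (if e ∈ A then -(nu p)⁻¹ else 1) * (1 - p) with hG
  have step1 : ∀ x ∈ E.powerset,
      (∏ e ∈ P, if e ∈ x then (1:ℝ) else 0) *
        (∏ i ∈ A, if i ∈ x then nu p else -(nu p)⁻¹) *
        (p ^ x.card * (1 - p) ^ (E.card - x.card))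
      = (∏ e ∈ x, F e) * (∏ e ∈ E \ x, G e) := by
    intro x hx
    rw [mem_powerset] at hx
    have hPsi : (∏ i ∈ A, if i ∈ x then nu p else -(nu p)⁻¹)
        = (∏ i ∈ x, if i ∈ A then nu p else 1) *
            (∏ i ∈ E \ x, if i ∈ A then -(nu p)⁻¹ else 1) := by
      rw [Finset.prod_ite, Finset.prod_ite, Finset.prod_ite]
      have e1 : A.filter (fun i => i ∈ x) = x.filter (fun i => i ∈ A) := by
        ext a; simp [and_comm]
      have e2 : A.filter (fun i => ¬ i ∈ x) = (E \ x).filter (fun i => i ∈ A) := by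
        ext a; simp only [mem_filter, Finset.mem_sdiff]
        constructor
        · rintro ⟨h1, h2⟩; exact ⟨⟨hA h1, h2⟩, h1⟩
        · rintro ⟨⟨_, h2⟩, h3⟩; exact ⟨h3, h2⟩
      rw [e1, e2]
      simp only [Finset.prod_const]
      ring
    have hind : (∏ e ∈ P, if e ∈ x then (1:ℝ) else 0)
        = ∏ e ∈ E \ x, (if e ∈ P then (0:ℝ) else 1) := by
      rw [prod_ind_one, prod_ind_zero hP hx]
    have hcard : (E \ x).card = E.card - x.card := card_sdiff_of_subset hx
    rw [hPsi, hind, hF, hG]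
    simp only [Finset.prod_mul_distrib, Finset.prod_const, hcard]
    ring
  rw [Finset.sum_congr rfl step1, ← Finset.prod_add]
  by_cases hAP : A ⊆ P
  · rw [if_pos hAP]
    have houter : ∏ e ∈ E, (F e + G e) = ∏ e ∈ P, (F e + G e) := by
      refine (Finset.prod_subset hP (fun e heE heP => ?_)).symm
      have heA : e ∉ A := fun h => heP (hAP h)
      simp [hF, hG, if_neg heP, if_neg heA]
    rw [houter]
    have hinner : ∏ e ∈ P, (F e + G e) = ∏ e ∈ P, (if e ∈ A then nu p * p else p) := by
      refine Finset.prod_congr rfl (fun e heP => ?_)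
      simp only [hF, hG, if_pos heP]
      split_ifs <;> ring
    rw [hinner, Finset.prod_ite, Finset.prod_const, Finset.prod_const]
    have e1 : P.filter (fun e => e ∈ A) = A := by
      ext a; simp only [mem_filter]
      exact ⟨fun h => h.2, fun h => ⟨hAP h, h⟩⟩
    have e2 : (P.filter (fun e => ¬ e ∈ A)).card = P.card - A.card := by
      have h := Finset.card_filter_add_card_filter_not (s := P) (p := fun e => e ∈ A)
      rw [e1] at h
      omega
    have hle : A.card ≤ P.card := card_le_card hAP
    rw [e1, e2, mul_pow, mul_assoc, ← pow_add, Nat.add_sub_cancel' hle]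
  · rw [if_neg hAP]
    obtain ⟨a, haA, haP⟩ := not_subset.1 hAP
    refine Finset.prod_eq_zero (hA haA) ?_
    simp only [hF, hG, if_pos haA, if_neg haP]
    have := nu_key hp0 hp1
    ring_nf
    ring_nf at this
    linarith

/-! ### the inner product -/

def Sfun (p : ℝ) (n : ℕ) (A : Finset ℕ) : ℝ :=
  ∑ v ∈ Finset.range (2 ^ (n + 1) - 1), if A ⊆ pathSet v then p ^ depth v else 0

lemma innT_eq {p : ℝ} (hp0 : 0 < p) (hp1 : p < 1) {n : ℕ} {A : Finset ℕ} (hA : A ⊆ Eset n) :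
    innT p n (fcl n) (PsiT p A) = nu p ^ A.card * Sfun p n A := by
  have hpath : ∀ v ∈ Finset.range (2 ^ (n + 1) - 1), pathSet v ⊆ Eset n := by
    intro v hv
    rw [mem_range] at hv
    refine subset_trans (pathSet_subset_Icc v) ?_
    rw [Eset]
    exact Finset.Icc_subset_Icc_right (by omega)
  rw [innT]
  have e1 : ∀ x ∈ (Eset n).powerset,
      fcl n x * PsiT p A x * piT p n x
        = ∑ v ∈ Finset.range (2 ^ (n + 1) - 1),
            (∏ e ∈ pathSet v, if e ∈ x then (1:ℝ) else 0) *
              (∏ i ∈ A, if i ∈ x then nu p else -(nu p)⁻¹) *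
              (p ^ x.card * (1 - p) ^ ((Eset n).card - x.card)) := by
    intro x _
    rw [fcl, PsiT, piT, Finset.sum_mul, Finset.sum_mul]
  rw [Finset.sum_congr rfl e1, Finset.sum_comm]
  have e2 : ∀ v ∈ Finset.range (2 ^ (n + 1) - 1),
      (∑ x ∈ (Eset n).powerset,
        (∏ e ∈ pathSet v, if e ∈ x then (1:ℝ) else 0) *
          (∏ i ∈ A, if i ∈ x then nu p else -(nu p)⁻¹) *
          (p ^ x.card * (1 - p) ^ ((Eset n).card - x.card)))
      = nu p ^ A.card * (if A ⊆ pathSet v then p ^ depth v else 0) := by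
    intro v hv
    rw [main_sum hp0 hp1 (Eset n) (pathSet v) A (hpath v hv) hA, ← card_pathSet]
    split_ifs <;> ring
  rw [Finset.sum_congr rfl e2, ← Finset.mul_sum, Sfun]

/-! ### evaluating Sfun -/

lemma sup_mem {A : Finset ℕ} (h : A.Nonempty) : A.sup id ∈ A := by
  obtain ⟨b, hb, hs⟩ := Finset.exists_mem_eq_sup A h id
  rw [hs]; exact hb

lemma Sfun_zero {p : ℝ} {n : ℕ} {A : Finset ℕ} (hne : A.Nonempty)
    (h : ¬ A ⊆ pathSet (A.sup id)) : Sfun p n A = 0 := by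
  refine Finset.sum_eq_zero (fun v _ => if_neg (fun hAv => h (fun a ha => ?_)))
  exact mem_pathSet_of_le (hAv ha) (hAv (sup_mem hne)) (Finset.le_sup (f := id) ha)

lemma Sfun_val {p : ℝ} {n : ℕ} {A : Finset ℕ} (hne : A.Nonempty) (hA : A ⊆ Eset n)
    (h : A ⊆ pathSet (A.sup id)) :
    Sfun p n A = ∑ j ∈ Finset.Icc (depth (A.sup id)) n,
      (2:ℝ) ^ (j - depth (A.sup id)) * p ^ j := by
  set m := A.sup id with hm
  set d := depth m with hd
  have hmA : m ∈ A := sup_mem hne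
  have hmE : m ∈ Eset n := hA hmA
  rw [Eset, mem_Icc] at hmE
  obtain ⟨hm1, hm2⟩ := hmE
  have hdm : 2 ^ d ≤ m + 1 := depth_le m
  have hdm2 : m + 1 < 2 ^ (d + 1) := lt_depth m
  have hdIcc : d ∈ Finset.Icc 1 n := depth_mem_Icc (hA hmA)
  rw [mem_Icc] at hdIcc
  obtain ⟨hd1, hdn⟩ := hdIcc
  -- the block structure
  have hblock : ∀ j, d ≤ j → ∀ v ∈ Finset.Ico ((m+1) * 2^(j-d) - 1) ((m+2) * 2^(j-d) - 1),
      (v + 1) / 2 ^ (j - d) = m + 1 ∧ depth v = j := by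
    intro j hj v hv
    rw [mem_Ico] at hv
    have hq1 : (1:ℕ) ≤ 2 ^ (j - d) := Nat.one_le_two_pow
    have hlow : (m + 1) * 2 ^ (j - d) ≤ v + 1 := by omega
    have hhigh : v + 1 < (m + 2) * 2 ^ (j - d) := by omega
    have hdiv : (v + 1) / 2 ^ (j - d) = m + 1 :=
      Nat.div_eq_of_lt_le hlow (by rw [show m+1+1 = m+2 from rfl]; exact hhigh)
    refine ⟨hdiv, (depth_eq_iff v j).2 ⟨?_, ?_⟩⟩
    · calc 2 ^ j = 2 ^ d * 2 ^ (j - d) := by rw [← pow_add, Nat.add_sub_cancel' hj]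
      _ ≤ (m + 1) * 2 ^ (j - d) := Nat.mul_le_mul_right _ hdm
      _ ≤ v + 1 := hlow
    · calc v + 1 < (m + 2) * 2 ^ (j - d) := hhigh
      _ ≤ 2 ^ (d + 1) * 2 ^ (j - d) := Nat.mul_le_mul_right _ (by omega)
      _ = 2 ^ (j + 1) := by rw [← pow_add]; congr 1; omega
  have hfilter : (Finset.range (2 ^ (n + 1) - 1)).filter (fun v => A ⊆ pathSet v)
      = (Finset.Icc d n).biUnion
          (fun j => Finset.Ico ((m+1) * 2^(j-d) - 1) ((m+2) * 2^(j-d) - 1)) := by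
    ext v
    rw [mem_filter, mem_biUnion]
    constructor
    · rintro ⟨hvr, hAv⟩
      rw [mem_range] at hvr
      have hmv : m ∈ pathSet v := hAv hmA
      obtain ⟨_, i, hdiv⟩ := (mem_pathSet_iff m v).1 hmv
      have hpow : (0:ℕ) < 2 ^ i := Nat.pow_pos (by norm_num)
      have hlow : (m + 1) * 2 ^ i ≤ v + 1 :=
        (Nat.le_div_iff_mul_le hpow).1 (le_of_eq hdiv.symm)
      have hhigh : v + 1 < (m + 2) * 2 ^ i := by
        rw [← Nat.div_lt_iff_lt_mul hpow, hdiv]; omega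
      have hdv : depth v = d + i := by
        refine (depth_eq_iff v (d + i)).2 ⟨?_, ?_⟩
        · calc 2 ^ (d + i) = 2 ^ d * 2 ^ i := pow_add 2 d i
          _ ≤ (m + 1) * 2 ^ i := Nat.mul_le_mul_right _ hdm
          _ ≤ v + 1 := hlow
        · calc v + 1 < (m + 2) * 2 ^ i := hhigh
          _ ≤ 2 ^ (d + 1) * 2 ^ i := Nat.mul_le_mul_right _ (by omega)
          _ = 2 ^ (d + i + 1) := by rw [← pow_add]; congr 1; omega
      have hjn : d + i ≤ n := by
        by_contra hcon
        have h1 : 2 ^ (n + 1) ≤ 2 ^ (d + i) := Nat.pow_le_pow_right (by norm_num) (by omega)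
        have h2 := depth_le v
        rw [hdv] at h2
        omega
      refine ⟨d + i, by rw [mem_Icc]; omega, ?_⟩
      rw [mem_Ico]
      have : d + i - d = i := by omega
      rw [this]
      omega
    · rintro ⟨j, hj, hv⟩
      rw [mem_Icc] at hj
      obtain ⟨hdiv, hdv⟩ := hblock j hj.1 v hv
      have hmv : m ∈ pathSet v := (mem_pathSet_iff m v).2 ⟨hm1, j - d, hdiv⟩
      refine ⟨?_, subset_trans h (pathSet_subset_of_mem hmv)⟩
      rw [mem_range]
      have h1 := lt_depth v
      rw [hdv] at h1
      have h2 : 2 ^ (j + 1) ≤ 2 ^ (n + 1) := Nat.pow_le_pow_right (by norm_num) (by omega)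
      omega
  have hdisj : (↑(Finset.Icc d n) : Set ℕ).PairwiseDisjoint
      (fun j => Finset.Ico ((m+1) * 2^(j-d) - 1) ((m+2) * 2^(j-d) - 1)) := by
    intro j1 hj1 j2 hj2 hne12
    simp only [Finset.coe_Icc, Set.mem_Icc] at hj1 hj2
    refine Finset.disjoint_left.2 (fun v hv1 hv2 => ?_)
    have e1 := (hblock j1 hj1.1 v hv1).2
    have e2 := (hblock j2 hj2.1 v hv2).2
    exact hne12 (by omega)
  rw [Sfun, ← Finset.sum_filter, hfilter, Finset.sum_biUnion hdisj]
  refine Finset.sum_congr rfl (fun j hj => ?_)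
  rw [mem_Icc] at hj
  have hsum : ∑ v ∈ Finset.Ico ((m+1) * 2^(j-d) - 1) ((m+2) * 2^(j-d) - 1), (p:ℝ) ^ depth v
      = ∑ v ∈ Finset.Ico ((m+1) * 2^(j-d) - 1) ((m+2) * 2^(j-d) - 1), (p:ℝ) ^ j := by
    refine Finset.sum_congr rfl (fun v hv => ?_)
    rw [(hblock j hj.1 v hv).2]
  rw [hsum, Finset.sum_const, Nat.card_Ico]
  have hcard : (m+2) * 2^(j-d) - 1 - ((m+1) * 2^(j-d) - 1) = 2 ^ (j - d) := by
    have h : (m+2) * 2^(j-d) = (m+1) * 2^(j-d) + 2^(j-d) := by ring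
    rw [h]
    exact sub_helper _ _ (Nat.one_le_iff_ne_zero.2 (Nat.mul_ne_zero (by omega)
      (Nat.pos_iff_ne_zero.1 (Nat.pow_pos (by norm_num)))))
  rw [hcard, nsmul_eq_mul]
  push_cast
  ring

/-! ### the geometric sum -/

lemma geom_eval {p : ℝ} (hp0 : 0 < p) (hp1 : p < 1) {n d : ℕ} (hd1 : 1 ≤ d) (hdn : d ≤ n) :
    (∑ j ∈ Finset.Icc d n, (2:ℝ) ^ (j - d) * p ^ j) ^ 2 = gtree p n d := by
  have e1 : ∑ j ∈ Finset.Icc d n, (2:ℝ) ^ (j - d) * p ^ j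
      = p ^ d * ∑ i ∈ Finset.range (n + 1 - d), (2 * p) ^ i := by
    rw [← Finset.Ico_add_one_right_eq_Icc, Finset.sum_Ico_eq_sum_range, Finset.mul_sum]
    refine Finset.sum_congr rfl (fun i _ => ?_)
    have : d + i - d = i := by omega
    rw [this, pow_add, mul_pow]
    ring
  rw [e1, mul_pow, ← pow_mul, gtree]
  split_ifs with hp
  · subst hp
    have : (2:ℝ) * (1/2) = 1 := by norm_num
    rw [this]
    simp only [one_pow, Finset.sum_const, Finset.card_range, nsmul_eq_mul, mul_one]
    rw [show ((1:ℝ)/2) = (2:ℝ)⁻¹ from one_div 2, inv_pow]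
    ring
  · have h2p : (2:ℝ) * p ≠ 1 := by
      intro hcon
      exact hp (by linarith)
    rw [geom_sum_eq h2p]
    congr 1
    rw [mul_comm d 2, pow_mul]
    congr 1
    rw [show (1 - (2*p)^(n+1-d) : ℝ) = -((2*p)^(n+1-d) - 1) from by ring,
      show (1 - 2*p : ℝ) = -(2*p - 1) from by ring, neg_div_neg_eq]

/-! ### counting the fibers over the maximum -/

lemma fiber_card {n k : ℕ} (hk : 1 ≤ k) {m : ℕ} (hm : m ∈ Eset n) :
    ((((Eset n).powerset.filter (fun A => A.card = k ∧ A ⊆ pathSet (A.sup id))).filter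
        (fun A => A.sup id = m)).card) = (depth m - 1).choose (k - 1) := by
  rw [Eset, mem_Icc] at hm
  obtain ⟨hm1, hm2⟩ := hm
  have hkey : (((Eset n).powerset.filter (fun A => A.card = k ∧ A ⊆ pathSet (A.sup id))).filter
        (fun A => A.sup id = m))
      = (Finset.powersetCard (k-1) ((pathSet m).erase m)).image (insert m) := by
    ext A
    simp only [mem_filter, mem_powerset, Finset.mem_image, Finset.mem_powersetCard]
    constructor
    · rintro ⟨⟨hAE, hcard, hpath⟩, hsup⟩
      have hne : A.Nonempty := Finset.card_pos.1 (by omega)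
      have hmA : m ∈ A := by rw [← hsup]; exact sup_mem hne
      refine ⟨A.erase m, ⟨?_, ?_⟩, ?_⟩
      · intro a ha
        rw [Finset.mem_erase] at ha
        rw [Finset.mem_erase]
        exact ⟨ha.1, by rw [← hsup]; exact hpath ha.2⟩
      · rw [Finset.card_erase_of_mem hmA, hcard]
      · rw [Finset.insert_erase hmA]
    · rintro ⟨A', ⟨hsub, hcard⟩, rfl⟩
      have hmA' : m ∉ A' := fun h => (Finset.mem_erase.1 (hsub h)).1 rfl
      have hub : ∀ a ∈ A', a ≤ m := by
        intro a ha
        have := Finset.mem_erase.1 (hsub ha)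
        have h2 := pathSet_subset_Icc m this.2
        rw [mem_Icc] at h2
        exact h2.2
      have hsupins : (insert m A').sup id = m := by
        rw [Finset.sup_insert]
        simp only [id]
        refine le_antisymm ?_ le_sup_left
        refine sup_le le_rfl (Finset.sup_le (fun a ha => hub a ha))
      have hsubpath : insert m A' ⊆ pathSet m := by
        intro a ha
        rcases Finset.mem_insert.1 ha with rfl | h
        · exact mem_pathSet_self hm1
        · exact (Finset.mem_erase.1 (hsub h)).2
      refine ⟨⟨?_, ?_, ?_⟩, hsupins⟩
      · refine subset_trans hsubpath (subset_trans (pathSet_subset_Icc m) ?_)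
        rw [Eset]
        exact Finset.Icc_subset_Icc_right hm2
      · rw [Finset.card_insert_of_notMem hmA', hcard]
        omega
      · rw [hsupins]
        exact hsubpath
  rw [hkey, Finset.card_image_of_injOn, Finset.card_powersetCard,
    Finset.card_erase_of_mem (mem_pathSet_self hm1), card_pathSet]
  intro A1 h1 A2 h2 he
  simp only [Finset.mem_coe, Finset.mem_powersetCard] at h1 h2
  have hm1' : m ∉ A1 := fun h => (Finset.mem_erase.1 (h1.1 h)).1 rfl
  have hm2' : m ∉ A2 := fun h => (Finset.mem_erase.1 (h2.1 h)).1 rfl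
  have := congrArg (fun s => Finset.erase s m) he
  simpa [Finset.erase_insert hm1', Finset.erase_insert hm2'] using this

/-- for k ∈ {1,…,|B_n|},
Σ_{A⊆B_n, |A|=k} ⟨f_n, Ψ_A⟩² = ν_p^{2k} Σ_{d=1}^n C(d−1,k−1)·2^d·g_{p,n}(d). -/
theorem tree_energy_distribution (n : ℕ) (hn : 1 ≤ n) (p : ℝ) (hp0 : 0 < p) (hp1 : p < 1)
    (k : ℕ) (hk : k ∈ Finset.Icc 1 (Eset n).card) :
    ∑ A ∈ (Eset n).powerset.filter (fun A => A.card = k),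
        (innT p n (fcl n) (PsiT p A)) ^ 2
      = nu p ^ (2 * k) *
          ∑ d ∈ Finset.Icc 1 n, ((d - 1).choose (k - 1) : ℝ) * 2 ^ d * gtree p n d := by
  rw [mem_Icc] at hk
  obtain ⟨hk1, _⟩ := hk
  -- Step 1: rewrite each summand
  have step1 : ∀ A ∈ (Eset n).powerset.filter (fun A => A.card = k),
      (innT p n (fcl n) (PsiT p A)) ^ 2 = nu p ^ (2 * k) * (Sfun p n A) ^ 2 := by
    intro A hA
    rw [mem_filter, mem_powerset] at hA
    rw [innT_eq hp0 hp1 hA.1, mul_pow, ← pow_mul, hA.2, mul_comm k 2]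
  rw [Finset.sum_congr rfl step1, ← Finset.mul_sum]
  congr 1
  -- Step 2: restrict to path-like A
  rw [← Finset.sum_filter_of_ne (p := fun A => A ⊆ pathSet (A.sup id))
    (f := fun A => (Sfun p n A) ^ 2) ?vanish]
  case vanish =>
    intro A hA hne
    rw [mem_filter] at hA
    by_contra hcon
    have hAne : A.Nonempty := Finset.card_pos.1 (by omega)
    refine hne ?_
    show Sfun p n A ^ 2 = 0
    rw [Sfun_zero hAne hcon]
    norm_num
  rw [Finset.filter_filter]
  -- Step 3: group by the maximum m = A.sup id
  set s2 := (Eset n).powerset.filter (fun A => A.card = k ∧ A ⊆ pathSet (A.sup id)) with hs2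
  have hmaps : ∀ A ∈ s2, A.sup id ∈ Eset n := by
    intro A hA
    rw [hs2, mem_filter, mem_powerset] at hA
    exact hA.1 (sup_mem (Finset.card_pos.1 (by omega)))
  rw [← Finset.sum_fiberwise_of_maps_to hmaps (fun A => (Sfun p n A) ^ 2)]
  -- Step 4: evaluate each fiber
  have step4 : ∀ m ∈ Eset n,
      (∑ A ∈ s2.filter (fun A => A.sup id = m), (Sfun p n A) ^ 2)
        = ((depth m - 1).choose (k - 1) : ℝ) *
            (∑ j ∈ Finset.Icc (depth m) n, (2:ℝ) ^ (j - depth m) * p ^ j) ^ 2 := by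
    intro m hm
    have hval : ∀ A ∈ s2.filter (fun A => A.sup id = m),
        (Sfun p n A) ^ 2
          = (∑ j ∈ Finset.Icc (depth m) n, (2:ℝ) ^ (j - depth m) * p ^ j) ^ 2 := by
      intro A hA
      rw [mem_filter, hs2, mem_filter, mem_powerset] at hA
      obtain ⟨⟨hAE, hcard, hpath⟩, hsup⟩ := hA
      rw [Sfun_val (Finset.card_pos.1 (by omega)) hAE hpath, hsup]
    rw [Finset.sum_congr rfl hval, Finset.sum_const, nsmul_eq_mul, fiber_card hk1 hm]
  rw [Finset.sum_congr rfl step4]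
  -- Step 5: group by depth
  have hmaps2 : ∀ m ∈ Eset n, depth m ∈ Finset.Icc 1 n := fun m hm => depth_mem_Icc hm
  rw [← Finset.sum_fiberwise_of_maps_to hmaps2
    (fun m => ((depth m - 1).choose (k - 1) : ℝ) *
      (∑ j ∈ Finset.Icc (depth m) n, (2:ℝ) ^ (j - depth m) * p ^ j) ^ 2)]
  refine Finset.sum_congr rfl (fun d hd => ?_)
  rw [mem_Icc] at hd
  have hcongr : ∀ m ∈ (Eset n).filter (fun m => depth m = d),
      ((depth m - 1).choose (k - 1) : ℝ) *
        (∑ j ∈ Finset.Icc (depth m) n, (2:ℝ) ^ (j - depth m) * p ^ j) ^ 2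
      = ((d - 1).choose (k - 1) : ℝ) * gtree p n d := by
    intro m hm
    rw [mem_filter] at hm
    rw [hm.2, geom_eval hp0 hp1 hd.1 hd.2]
  rw [Finset.sum_congr rfl hcongr, Finset.sum_const, nsmul_eq_mul,
    Eset_depth_fiber n d hd.1 hd.2]
  push_cast
  ring


end
end

section
/- Fix p ∈ (0, 1/2). Then as n → ∞, (1−2p)² · Σ_{d=1}^n 2^d · g_{p,n}(d) · (p^{−d} − 1)/d converges to log(1 − 2p²) − log(1 − 2p) = log((1−2p²)/(1−2p)). (This sum equals var_p(f_n)·E[W_{p,n}^{−1}], where W_{p,n} is the spectral-weight random variable of the cluster-size function f_n on the perfect binary tree of depth n.) -/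
open Finset Filter

noncomputable section
open scoped Classical

/-- for fixed p ∈ (0,1/2),
(1−2p)² Σ_{d=1}^n 2^d g_{p,n}(d) (p^{−d}−1)/d → log(1−2p²) − log(1−2p) = log((1−2p²)/(1−2p))
as n → ∞. -/
theorem tree_subcritical_tau_sum_limit (p : ℝ) (hp0 : 0 < p) (hp1 : p < 1 / 2) :
    Tendsto (fun n => (1 - 2 * p) ^ 2 *
        ∑ d ∈ Finset.Icc 1 n, (2 : ℝ) ^ d * gtree p n d * ((p ^ d)⁻¹ - 1) / (d : ℝ))
      atTop (nhds (Real.log (1 - 2 * p ^ 2) - Real.log (1 - 2 * p))) := by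
  have hpne : p ≠ 1 / 2 := ne_of_lt hp1
  set x : ℝ := 2 * p with hxdef
  set y : ℝ := 2 * p ^ 2 with hydef
  have hx0 : 0 < x := by positivity
  have hx1 : x < 1 := by rw [hxdef]; linarith
  have hy0 : 0 < y := by positivity
  have hyx : y ≤ x := by nlinarith
  have hy1 : y < 1 := lt_of_le_of_lt hyx hx1
  -- the series
  have hA := Real.hasSum_pow_div_log_of_abs_lt_one (x := x) (by rw [abs_of_pos hx0]; exact hx1)
  have hB := Real.hasSum_pow_div_log_of_abs_lt_one (x := y) (by rw [abs_of_pos hy0]; exact hy1)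
  have hAB := hA.sub hB
  have h1 : Tendsto (fun n => ∑ k ∈ Finset.range n, (x ^ (k + 1) - y ^ (k + 1)) / (k + 1))
      atTop (nhds (Real.log (1 - y) - Real.log (1 - x))) := by
    have := hAB.tendsto_sum_nat
    simp only [sub_div] at this ⊢
    convert this using 2
    ring
  -- rewrite main expression
  have key : ∀ n : ℕ, (1 - 2 * p) ^ 2 *
      ∑ d ∈ Finset.Icc 1 n, (2 : ℝ) ^ d * gtree p n d * ((p ^ d)⁻¹ - 1) / (d : ℝ)
      = (∑ k ∈ Finset.range n, (x ^ (k + 1) - y ^ (k + 1)) / (k + 1))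
        - ∑ k ∈ Finset.range n,
            (x ^ (k + 1) - y ^ (k + 1)) / (k + 1) * (1 - (1 - x ^ (n - k)) ^ 2) := by
    intro n
    rw [Finset.mul_sum, ← Finset.sum_sub_distrib, ← Finset.Ico_add_one_right_eq_Icc, Finset.sum_Ico_eq_sum_range]
    apply Finset.sum_congr (by norm_num)
    intro k hk
    simp only [gtree, if_neg hpne]
    have h1k : 1 + k - 1 = k := by omega
    have hnk : n + 1 - (1 + k) = n - k := by omega
    rw [hnk]
    have hq : p ^ (1 + k) ≠ 0 := pow_ne_zero _ (ne_of_gt hp0)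
    have h2p : (1 - 2 * p) ≠ 0 := by intro h; apply hpne; linarith
    have hd : ((1 + k : ℕ) : ℝ) ≠ 0 := by positivity
    have e1 : x ^ (1 + k) = 2 ^ (1 + k) * p ^ (1 + k) := by rw [hxdef, mul_pow]
    have e2 : y ^ (1 + k) = 2 ^ (1 + k) * (p ^ (1 + k)) ^ 2 := by
      rw [hydef, mul_pow, ← pow_mul, ← pow_mul, Nat.mul_comm]
    have e3 : p ^ (2 * (1 + k)) = (p ^ (1 + k)) ^ 2 := by rw [pow_mul']
    push_cast
    rw [e3]
    field_simp
    ring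
  simp only [← hxdef] at key
  simp only [key]
  have h2 : Tendsto (fun n => ∑ k ∈ Finset.range n,
      (x ^ (k + 1) - y ^ (k + 1)) / (k + 1) * (1 - (1 - x ^ (n - k)) ^ 2)) atTop (nhds 0) := by
    have hbnd : Tendsto (fun n : ℕ => (n : ℝ) * (2 * x * x ^ n)) atTop (nhds 0) := by
      have := (tendsto_pow_const_mul_const_pow_of_lt_one 1 hx0.le hx1).const_mul (2 * x)
      simp only [pow_one, mul_zero] at this
      convert this using 2 with n
      ring
    apply squeeze_zero (fun n => ?_) (fun n => ?_) hbnd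
    · apply Finset.sum_nonneg
      intro k hk
      apply mul_nonneg
      · apply div_nonneg _ (by positivity)
        have := pow_le_pow_left₀ hy0.le hyx (k + 1)
        linarith
      · have h1 : x ^ (n - k) ≤ 1 := pow_le_one₀ hx0.le hx1.le
        have h2 : 0 ≤ x ^ (n - k) := by positivity
        nlinarith
    · calc ∑ k ∈ Finset.range n, (x ^ (k + 1) - y ^ (k + 1)) / (k + 1) * (1 - (1 - x ^ (n - k)) ^ 2)
          ≤ ∑ k ∈ Finset.range n, 2 * x * x ^ n := by
            apply Finset.sum_le_sum
            intro k hk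
            have hs0 : 0 ≤ x ^ (n - k) := by positivity
            have hs1 : x ^ (n - k) ≤ 1 := pow_le_one₀ hx0.le hx1.le
            have ha : (x ^ (k + 1) - y ^ (k + 1)) / (k + 1) ≤ x ^ (k + 1) := by
              have h1 : (x ^ (k + 1) - y ^ (k + 1)) / (k + 1) ≤ x ^ (k + 1) - y ^ (k + 1) := by
                apply div_le_self _ (by exact_mod_cast Nat.one_le_iff_ne_zero.mpr (Nat.succ_ne_zero k))
                have := pow_le_pow_left₀ hy0.le hyx (k + 1)
                linarith
              have : 0 < y ^ (k + 1) := by positivity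
              linarith
            have ha0 : 0 ≤ (x ^ (k + 1) - y ^ (k + 1)) / (k + 1) := by
              apply div_nonneg _ (by positivity)
              have := pow_le_pow_left₀ hy0.le hyx (k + 1)
              linarith
            have hc : 1 - (1 - x ^ (n - k)) ^ 2 ≤ 2 * x ^ (n - k) := by nlinarith
            have hc0 : 0 ≤ 1 - (1 - x ^ (n - k)) ^ 2 := by nlinarith
            calc (x ^ (k + 1) - y ^ (k + 1)) / (k + 1) * (1 - (1 - x ^ (n - k)) ^ 2)
                ≤ x ^ (k + 1) * (2 * x ^ (n - k)) := by
                  apply mul_le_mul ha hc hc0 (by positivity)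
              _ = 2 * (x ^ (k + 1) * x ^ (n - k)) := by ring
              _ = 2 * x ^ (n + 1) := by
                  rw [← pow_add]
                  congr 2
                  have : k < n := Finset.mem_range.mp hk
                  omega
              _ = 2 * x * x ^ n := by rw [pow_succ]; ring
          _ = (n : ℝ) * (2 * x * x ^ n) := by
            rw [Finset.sum_const, Finset.card_range, nsmul_eq_mul]
  have := h1.sub h2
  rw [sub_zero] at this
  exact this


end
end

section
/- Fix p ∈ (1/2, 1). Then as n → ∞, (2p)^{−2n−2} (1−2p)² · Σ_{d=1}^n 2^d · g_{p,n}(d) · (p^{−d} − 1)/d converges to log(2p/(2p−1)) − log 2 = log(p/(2p−1)). -/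
open Finset Filter

noncomputable section
open scoped Classical

/-! Put `r = (2p)⁻¹ < 1`. Since `2^d p^{2d} (p^{-d} - 1) = (2p)^d (1 - p^d)`, the normalised
`d`-th summand is `(1 - p^d) r^d (1 - r^{n+1-d})² / d`. Dropping the factor `(1 - r^{n+1-d})²`
costs at most `2 r^{n+1}` per summand, hence `O(n r^n) → 0` in total, and what remains,
`∑_{d ≤ n} (r^d - 2^{-d}) / d`, is a partial sum of `-log (1 - r) + log (1 - 1/2)`. -/

open Real

lemma sum_Icc_one_eq_sum_range_succ {M : Type*} [AddCommMonoid M] (f : ℕ → M) (n : ℕ) :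
    ∑ d ∈ Icc 1 n, f d = ∑ k ∈ range n, f (k + 1) := by
  rw [← Ico_add_one_right_eq_Icc, sum_Ico_eq_sum_range, Nat.add_sub_cancel]
  simp only [add_comm 1]

lemma tendsto_sum_Icc_pow_div {x : ℝ} (hx : |x| < 1) :
    Tendsto (fun n : ℕ => ∑ d ∈ Icc 1 n, x ^ d / (d : ℝ)) atTop (nhds (log (1 - x)⁻¹)) := by
  rw [log_inv]
  simpa only [sum_Icc_one_eq_sum_range_succ, Nat.cast_succ]
    using (hasSum_pow_div_log_of_abs_lt_one hx).tendsto_sum_nat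

lemma tendsto_sum_Icc_of_abs_le_mul_pow {f : ℕ → ℕ → ℝ} {C r : ℝ} (hr : |r| < 1)
    (hf : ∀ n, ∀ d ∈ Icc 1 n, |f n d| ≤ C * r ^ n) :
    Tendsto (fun n => ∑ d ∈ Icc 1 n, f n d) atTop (nhds 0) := by
  refine squeeze_zero_norm (a := fun n : ℕ => C * (n * r ^ n)) (fun n => ?_) ?_
  · calc ‖∑ d ∈ Icc 1 n, f n d‖ ≤ ∑ d ∈ Icc 1 n, |f n d| := abs_sum_le_sum_abs _ _
      _ ≤ #(Icc 1 n) • (C * r ^ n) := sum_le_card_nsmul _ _ _ (hf n)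
      _ = C * (n * r ^ n) := by rw [Nat.card_Icc, Nat.add_sub_cancel, nsmul_eq_mul]; ring
  · simpa using (tendsto_self_mul_const_pow_of_abs_lt_one hr).const_mul C

lemma gtree_summand_eq {p : ℝ} (hp0 : p ≠ 0) (hp : p ≠ 1 / 2) {n d : ℕ} (hd : d ≤ n + 1) :
    ((2 * p) ^ (2 * n + 2))⁻¹ * (1 - 2 * p) ^ 2 *
        ((2 : ℝ) ^ d * gtree p n d * ((p ^ d)⁻¹ - 1) / d)
      = (1 - p ^ d) / d * (2 * p)⁻¹ ^ d * (1 - (2 * p)⁻¹ ^ (n + 1 - d)) ^ 2 := by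
  have h2p : 1 - 2 * p ≠ 0 := fun h => hp (by linarith)
  have hexp : 2 * n + 2 = 2 * d + 2 * (n + 1 - d) := by omega
  rw [gtree, if_neg hp, hexp]
  simp only [inv_pow]
  field_simp
  ring

lemma abs_summand_error_le {p r : ℝ} (hp0 : 0 ≤ p) (hp1 : p ≤ 1) (hr0 : 0 ≤ r) (hr1 : r ≤ 1)
    {n d : ℕ} (hd : d ∈ Icc 1 n) :
    |(1 - p ^ d) / d * r ^ d * ((1 - r ^ (n + 1 - d)) ^ 2 - 1)| ≤ 2 * r * r ^ n := by
  obtain ⟨hd1, hdn⟩ := mem_Icc.mp hd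
  have hcoef : |(1 - p ^ d) / d| ≤ 1 := by
    have hd1' : (1 : ℝ) ≤ d := by exact_mod_cast hd1
    have := pow_le_one₀ hp0 hp1 (n := d)
    rw [abs_of_nonneg (div_nonneg (by linarith) (by linarith)), div_le_one (by linarith)]
    linarith [pow_nonneg hp0 d]
  set m := n + 1 - d
  have hrm0 := pow_nonneg hr0 m
  have hrm1 := pow_le_one₀ hr0 hr1 (n := m)
  have hsq : |(1 - r ^ m) ^ 2 - 1| ≤ 2 * r ^ m := by
    rw [abs_le]; constructor <;> nlinarith
  calc |(1 - p ^ d) / d * r ^ d * ((1 - r ^ m) ^ 2 - 1)|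
      = |(1 - p ^ d) / d| * r ^ d * |(1 - r ^ m) ^ 2 - 1| := by
        rw [abs_mul, abs_mul, abs_of_nonneg (pow_nonneg hr0 d)]
    _ ≤ 1 * r ^ d * (2 * r ^ m) := by gcongr
    _ = 2 * r * r ^ n := by
        rw [one_mul, mul_left_comm, ← pow_add, show d + m = n + 1 by omega, pow_succ]
        ring

/-- for fixed p ∈ (1/2,1),
(2p)^{−2n−2}(1−2p)² Σ_{d=1}^n 2^d g_{p,n}(d) (p^{−d}−1)/d → log(2p/(2p−1)) − log 2
= log(p/(2p−1)) as n → ∞. -/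
theorem tree_supercritical_tau_sum_limit (p : ℝ) (hp0 : 1 / 2 < p) (hp1 : p < 1) :
    Tendsto (fun n => ((2 * p) ^ (2 * n + 2))⁻¹ * (1 - 2 * p) ^ 2 *
        ∑ d ∈ Finset.Icc 1 n, (2 : ℝ) ^ d * gtree p n d * ((p ^ d)⁻¹ - 1) / (d : ℝ))
      atTop (nhds (Real.log (2 * p / (2 * p - 1)) - Real.log 2)) := by
  set r := (2 * p)⁻¹ with hr
  have hr0 : 0 ≤ r := by positivity
  have hr1 : r < 1 := inv_lt_one_of_one_lt₀ (by linarith)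
  have hpr : p * r = 2⁻¹ := by rw [hr]; field_simp
  have hsplit : ∀ n : ℕ, ((2 * p) ^ (2 * n + 2))⁻¹ * (1 - 2 * p) ^ 2 *
        ∑ d ∈ Icc 1 n, (2 : ℝ) ^ d * gtree p n d * ((p ^ d)⁻¹ - 1) / (d : ℝ)
      = (∑ d ∈ Icc 1 n, r ^ d / (d : ℝ) - ∑ d ∈ Icc 1 n, (2⁻¹ : ℝ) ^ d / (d : ℝ))
        + ∑ d ∈ Icc 1 n, (1 - p ^ d) / d * r ^ d * ((1 - r ^ (n + 1 - d)) ^ 2 - 1) := by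
    intro n
    rw [mul_sum, ← sum_sub_distrib, ← sum_add_distrib]
    refine sum_congr rfl fun d hd => ?_
    rw [gtree_summand_eq (by linarith) (by linarith) (by linarith [(mem_Icc.mp hd).2]),
      ← hpr, mul_pow]
    ring
  have hmain := (tendsto_sum_Icc_pow_div (x := r) (by rwa [abs_of_nonneg hr0])).sub
    (tendsto_sum_Icc_pow_div (x := 2⁻¹) (by norm_num))
  have herror := tendsto_sum_Icc_of_abs_le_mul_pow (by rwa [abs_of_nonneg hr0])
    fun n d hd => abs_summand_error_le (by linarith) hp1.le hr0 hr1.le hd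
  have hlimit : log (1 - r)⁻¹ - log (1 - 2⁻¹)⁻¹ = log (2 * p / (2 * p - 1)) - log 2 := by
    rw [hr, show (1 - (2 * p)⁻¹)⁻¹ = 2 * p / (2 * p - 1) by field_simp]
    norm_num
  simpa only [hsplit, hlimit, add_zero] using hmain.add herror
end
end
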